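/- arXiv:2305.01917 — 7 statements merged into one kernel-verified Lean document; each statement's English description precedes it below -/
import Mathlib

section
/- Let E¹, E⁰, Y be topological spaces with E⁰ Hausdorff, let s : E¹ → E⁰ and ψ : E¹ → Y be continuous, and let α : Y → E⁰ be a continuous surjection such that α⁻¹(K) is compact for every compact subset K of E⁰. Equip F = {(e, y) ∈ E¹ × Y : s(e) = α(y)} with the subspace topology of the product, and define r_I : F → Y by r_I(e, y) = ψ(e). Then for every compact subset K of Y, the preimage r_I⁻¹(K) is compact if and only if ψ⁻¹(K) is compact. -/
/-!
`r_I` is `ψ` composed with the first projection `F → E¹`, so `r_I⁻¹(K) = fst⁻¹(ψ⁻¹(K))`.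
Since `α` is onto, `fst` is onto, and `ψ⁻¹(K)` is the continuous image of `r_I⁻¹(K)`.
Conversely, over a compact `S ⊆ E¹` the fibre product `fst⁻¹(S)` sits inside
`S × α⁻¹(s(S))`, which is compact because `α` pulls compacts back to compacts; and `F` is closed
in `E¹ × Y` because `E⁰` is Hausdorff.
-/

namespace Function.Pullback

open Topology

variable {X Y Z : Type*} {f : X → Y} {g : Z → Y}

theorem fst_surjective (hg : Surjective g) : Surjective (fst : f.Pullback g → X) := fun x ↦
  let ⟨z, hz⟩ := hg (f x)
  ⟨⟨(x, z), hz.symm⟩, rfl⟩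

variable [TopologicalSpace X] [TopologicalSpace Z]

theorem continuous_fst : Continuous (fst : f.Pullback g → X) :=
  _root_.continuous_fst.comp continuous_subtype_val

variable [TopologicalSpace Y]

theorem isClosedEmbedding_val [T2Space Y] (hf : Continuous f) (hg : Continuous g) :
    IsClosedEmbedding (Subtype.val : f.Pullback g → X × Z) :=
  (isClosed_eq (hf.comp _root_.continuous_fst) (hg.comp continuous_snd))
    |>.isClosedEmbedding_subtypeVal

theorem isCompact_preimage_fst [T2Space Y] (hf : Continuous f) (hg : Continuous g)
    (hg_compact : ∀ K : Set Y, IsCompact K → IsCompact (g ⁻¹' K)) {S : Set X}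
    (hS : IsCompact S) : IsCompact (fst ⁻¹' S : Set (f.Pullback g)) := by
  have hbox :
      fst ⁻¹' S = (Subtype.val : f.Pullback g → X × Z) ⁻¹' (S ×ˢ (g ⁻¹' (f '' S))) := by
    ext p
    exact ⟨fun hp ↦ ⟨hp, p.val.1, hp, p.property⟩, And.left⟩
  rw [hbox]
  exact (isClosedEmbedding_val hf hg).isCompact_preimage
    (hS.prod (hg_compact _ (hS.image hf)))

end Function.Pullback

theorem statement_3_general {E1 E0 Y : Type*} [TopologicalSpace E1] [TopologicalSpace E0]
    [TopologicalSpace Y] [T2Space E0] (s : E1 → E0) (ψ : E1 → Y) (α : Y → E0)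
    (hs : Continuous s) (hα : Continuous α)
    (hαsurj : Function.Surjective α)
    (hαproper : ∀ K : Set E0, IsCompact K → IsCompact (α ⁻¹' K))
    (K : Set Y) :
    IsCompact ((fun p : {p : E1 × Y // s p.1 = α p.2} => ψ p.val.1) ⁻¹' K) ↔
      IsCompact (ψ ⁻¹' K) := by
  change IsCompact (Function.Pullback.fst ⁻¹' (ψ ⁻¹' K) : Set (s.Pullback α)) ↔ _
  refine ⟨fun h ↦ ?_, Function.Pullback.isCompact_preimage_fst hs hα hαproper⟩
  rw [← Set.image_preimage_eq (ψ ⁻¹' K) (Function.Pullback.fst_surjective hαsurj)]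
  exact h.image Function.Pullback.continuous_fst

/-- Let `E⁰` be Hausdorff, `s : E¹ → E⁰` and `ψ : E¹ → Y` continuous, and `α : Y → E⁰` a
continuous surjection with compact preimages of compact sets. Equip the fibred product
`F = {(e, y) | s e = α y}` with the subspace topology and let `r_I (e, y) = ψ e`. Then for every
compact `K ⊆ Y`, the preimage `r_I ⁻¹' K` is compact iff `ψ ⁻¹' K` is compact. -/
theorem statement_3 {E1 E0 Y : Type*} [TopologicalSpace E1] [TopologicalSpace E0]
    [TopologicalSpace Y] [T2Space E0] (s : E1 → E0) (ψ : E1 → Y) (α : Y → E0)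
    (hs : Continuous s) (hψ : Continuous ψ) (hα : Continuous α)
    (hαsurj : Function.Surjective α)
    (hαproper : ∀ K : Set E0, IsCompact K → IsCompact (α ⁻¹' K))
    (K : Set Y) (hK : IsCompact K) :
    IsCompact ((fun p : {p : E1 × Y // s p.1 = α p.2} => ψ p.val.1) ⁻¹' K) ↔
      IsCompact (ψ ⁻¹' K) :=
  statement_3_general s ψ α hs hα hαsurj hαproper K
end

section
/- Let E⁰, E¹, Y be topological spaces, let r, s : E¹ → E⁰ be continuous with s a local homeomorphism, let ψ : E¹ → Y be continuous, and let α : Y → E⁰ be a continuous surjection with compact preimages of compact sets, such that α ∘ ψ = r. Let F = {(e, y) ∈ E¹ × Y : s(e) = α(y)} with the subspace topology, with maps r_I(e, y) = ψ(e) and s_I(e, y) = y. For n ≥ 1 let Pₙ(E) = {p : Fin n → E¹ : s(p(i)) = r(p(i+1)) for all 0 ≤ i < n−1} and Pₙ(E_I) = {q : Fin n → F : s_I(q(i)) = r_I(q(i+1)) for all 0 ≤ i < n−1}, each with the subspace topology of the corresponding product space. Then the map sending q to the pair ((i ↦ first coordinate of q(i)), second coordinate of q(n−1)) is a homeomorphism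 from Pₙ(E_I) onto {(p, y) ∈ Pₙ(E) × Y : s(p(n−1)) = α(y)}, with inverse sending (p, y) to the sequence i ↦ (p(i), ψ(p(i+1))) for i < n−1 and (n−1) ↦ (p(n−1), y). -/
/-- For a topological graph `E = (E⁰, E¹, r, s)` with an in-split `I = (α, Y, ψ)`, the space of
paths of length `n` in the in-split graph `E_I` is homeomorphic to the fibred product
`{(p, y) ∈ Pₙ(E) × Y | s (p (n-1)) = α y}`, via the explicit map sending a path `q` in `E_I` to
the sequence of first coordinates together with the second coordinate of the last edge, with the
explicit inverse `(p, y) ↦ (i ↦ (p i, ψ (p (i+1))) for i < n-1, (n-1) ↦ (p (n-1), y))`. -/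
theorem statement_4 {E0 E1 Y : Type*} [TopologicalSpace E0] [TopologicalSpace E1]
    [TopologicalSpace Y] (r s : E1 → E0) (ψ : E1 → Y) (α : Y → E0)
    (hr : Continuous r) (hs : IsLocalHomeomorph s) (hψ : Continuous ψ) (hα : Continuous α)
    (hαsurj : Function.Surjective α)
    (hαproper : ∀ K : Set E0, IsCompact K → IsCompact (α ⁻¹' K))
    (hfact : α ∘ ψ = r) (n : ℕ) (hn : 1 ≤ n) :
    ∃ H : {q : Fin n → {p : E1 × Y // s p.1 = α p.2} //
            ∀ i : Fin n, ∀ h : (i : ℕ) + 1 < n,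
              (q i).val.2 = ψ (q ⟨(i : ℕ) + 1, h⟩).val.1} ≃ₜ
          {py : (Fin n → E1) × Y //
            (∀ i : Fin n, ∀ h : (i : ℕ) + 1 < n, s (py.1 i) = r (py.1 ⟨(i : ℕ) + 1, h⟩)) ∧
              s (py.1 ⟨n - 1, Nat.sub_lt hn one_pos⟩) = α py.2},
      (∀ q, (H q).val =
        (fun i => (q.val i).val.1, (q.val ⟨n - 1, Nat.sub_lt hn one_pos⟩).val.2)) ∧
      (∀ p, ∀ i : Fin n, ((H.symm p).val i).val =
        if h : (i : ℕ) + 1 < n then (p.val.1 i, ψ (p.val.1 ⟨(i : ℕ) + 1, h⟩))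
        else (p.val.1 i, p.val.2)) := by
  have hαψ : ∀ e, α (ψ e) = r e := fun e => congrFun hfact e
  refine ⟨⟨⟨fun q => ⟨(fun i => (q.val i).val.1, (q.val ⟨n - 1, Nat.sub_lt hn one_pos⟩).val.2),
      ?_, (q.val ⟨n - 1, Nat.sub_lt hn one_pos⟩).property⟩,
    fun p => ⟨fun i => ⟨(p.val.1 i,
        if h : (i : ℕ) + 1 < n then ψ (p.val.1 ⟨(i : ℕ) + 1, h⟩) else p.val.2), ?_⟩, ?_⟩,
    ?_, ?_⟩, ?_, ?_⟩, ?_, ?_⟩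
  · -- path condition of forward image
    intro i h
    have h1 := (q.val i).property
    have h2 := q.property i h
    rw [show s (q.val i).val.1 = α (q.val i).val.2 from h1, h2, hαψ]
  · -- membership for inverse
    dsimp only
    by_cases h : (i : ℕ) + 1 < n
    · rw [dif_pos h, hαψ]
      exact p.property.1 i h
    · rw [dif_neg h]
      have hi : i = ⟨n - 1, Nat.sub_lt hn one_pos⟩ := Fin.ext (show (i : ℕ) = n - 1 by have := i.isLt; omega)
      rw [hi]
      exact p.property.2
  · -- path condition for inverse
    intro i h
    simp only [dif_pos h]
  · -- left inverse
    intro q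
    apply Subtype.ext
    funext i
    apply Subtype.ext
    apply Prod.ext
    · rfl
    · dsimp only
      by_cases h : (i : ℕ) + 1 < n
      · rw [dif_pos h]
        exact (q.property i h).symm
      · rw [dif_neg h]
        have hi : i = ⟨n - 1, Nat.sub_lt hn one_pos⟩ := Fin.ext (show (i : ℕ) = n - 1 by have := i.isLt; omega)
        rw [hi]
  · -- right inverse
    intro p
    apply Subtype.ext
    apply Prod.ext
    · rfl
    · dsimp only
      rw [dif_neg (by omega)]
  · -- continuity forward
    apply Continuous.subtype_mk
    exact Continuous.prodMk
      (continuous_pi fun i =>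
        (continuous_fst.comp (continuous_subtype_val.comp
          ((continuous_apply i).comp continuous_subtype_val))))
      (continuous_snd.comp (continuous_subtype_val.comp
        ((continuous_apply _).comp continuous_subtype_val)))
  · -- continuity inverse
    apply Continuous.subtype_mk
    apply continuous_pi
    intro i
    apply Continuous.subtype_mk
    apply Continuous.prodMk
    · exact (continuous_apply i).comp (continuous_fst.comp continuous_subtype_val)
    · by_cases h : (i : ℕ) + 1 < n
      · simp only [dif_pos h]
        exact hψ.comp ((continuous_apply _).comp (continuous_fst.comp continuous_subtype_val))
      · simp only [dif_neg h]
        exact continuous_snd.comp continuous_subtype_val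
  · intro q
    rfl
  · intro p i
    simp only [Homeomorph.homeomorph_mk_coe_symm, Equiv.coe_fn_symm_mk]
    by_cases h : (i : ℕ) + 1 < n
    · simp only [dif_pos h]
    · simp only [dif_neg h]
end

section
/- Let E⁰, E¹, Y be topological spaces, let r, s : E¹ → E⁰ be continuous with s a local homeomorphism, let ψ : E¹ → Y be continuous, and let α : Y → E⁰ be a continuous surjection with compact preimages of compact sets, such that α ∘ ψ = r. Let E^∞ = {e : ℕ → E¹ : s(e_i) = r(e_{i+1}) for all i ∈ ℕ} and E_I^∞ = {q : ℕ → E¹ × Y : s((q_i).1) = α((q_i).2) and (q_i).2 = ψ((q_{i+1}).1) for all i ∈ ℕ}, each equipped with the subspace topology of the product topology, and let σ_E and σ_{E_I} denote the shift maps (σ(x))_i = x_{i+1} on E^∞ and E_I^∞ respectively. Then the map h : E_I^∞ → E^∞ defined by (h(q))_i = (q_i).1 is a homeomorphism satisfying σ_E ∘ h = h ∘ σ_{E_I}; in particular, the dynamical systems (σ_E, E^∞) and (σ_{E_I}, E_I^∞) on the infinite path spaces are topologically conjugate. -/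
/-- For a topological graph `E` with an in-split `I = (α, Y, ψ)`, the map sending an infinite
path of the in-split graph `E_I` to the sequence of first coordinates of its edges is a
homeomorphism from `E_I^∞` onto `E^∞` intertwining the shift maps; hence the shift dynamical
systems on the infinite path spaces are topologically conjugate. -/
theorem statement_5 {E0 E1 Y : Type*} [TopologicalSpace E0] [TopologicalSpace E1]
    [TopologicalSpace Y] (r s : E1 → E0) (ψ : E1 → Y) (α : Y → E0)
    (hr : Continuous r) (hs : IsLocalHomeomorph s) (hψ : Continuous ψ) (hα : Continuous α)
    (hαsurj : Function.Surjective α)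
    (hαproper : ∀ K : Set E0, IsCompact K → IsCompact (α ⁻¹' K))
    (hfact : α ∘ ψ = r) :
    ∃ H : {q : ℕ → E1 × Y // ∀ i, s (q i).1 = α (q i).2 ∧ (q i).2 = ψ (q (i + 1)).1} ≃ₜ
          {e : ℕ → E1 // ∀ i, s (e i) = r (e (i + 1))},
      (∀ q, ∀ i : ℕ, (H q).val i = (q.val i).1) ∧
      ∀ q, H ⟨fun i => q.val (i + 1), fun i => q.property (i + 1)⟩ =
        ⟨fun i => (H q).val (i + 1), fun i => (H q).property (i + 1)⟩ := by
  have hψα : ∀ x, α (ψ x) = r x := fun x => congrFun hfact x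
  refine ⟨{ toFun := fun q => ⟨fun i => (q.val i).1, fun i => by
              rw [(q.property i).1, (q.property i).2, hψα]⟩
            invFun := fun e => ⟨fun i => (e.val i, ψ (e.val (i + 1))), fun i => by
              constructor
              · rw [hψα]; exact e.property i
              · rfl⟩
            left_inv := fun q => by
              ext i
              · rfl
              · exact ((q.property i).2).symm
            right_inv := fun e => rfl
            continuous_toFun := by
              apply Continuous.subtype_mk
              exact continuous_pi fun i =>
                (continuous_fst.comp ((continuous_apply i).comp continuous_subtype_val))
            continuous_invFun := by
              apply Continuous.subtype_mk
              refine continuous_pi fun i => Continuous.prodMk ?_ ?_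
              · exact (continuous_apply i).comp continuous_subtype_val
              · exact hψ.comp ((continuous_apply (i + 1)).comp continuous_subtype_val) },
        fun q i => rfl, fun q => rfl⟩
end

section
/- Let E⁰, E¹, Y be topological spaces, let r, s : E¹ → E⁰ be continuous, and let α : Y → E⁰ and ψ : E¹ → Y be continuous with α ∘ ψ = r. Let F = {(e′, y, e) ∈ E¹ × Y × E¹ : s(e′) = α(y) and y = ψ(e)} and D = {(e′, e) ∈ E¹ × E¹ : s(e′) = r(e)}, each with the subspace topology of the corresponding product. Then the map (e′, y, e) ↦ (e′, e) is a homeomorphism from F onto D, with inverse (e′, e) ↦ (e′, ψ(e), e); moreover it intertwines the range maps (e′, y, e) ↦ e′ on F and (e′, e) ↦ e′ on D, and the source maps (e′, y, e) ↦ e on F and (e′, e) ↦ e on D. -/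
/-- For continuous maps `r, s : E¹ → E⁰`, `ψ : E¹ → Y`, `α : Y → E⁰` with `α ∘ ψ = r`, the map
`(e′, y, e) ↦ (e′, e)` is a homeomorphism from `F = {(e′, y, e) | s e′ = α y, y = ψ e}` onto
`D = {(e′, e) | s e′ = r e}`, with inverse `(e′, e) ↦ (e′, ψ e, e)`, intertwining the range maps
`(e′, y, e) ↦ e′` and `(e′, e) ↦ e′` and the source maps `(e′, y, e) ↦ e` and `(e′, e) ↦ e`. -/
theorem statement_6 {E0 E1 Y : Type*} [TopologicalSpace E0] [TopologicalSpace E1]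
    [TopologicalSpace Y] (r s : E1 → E0) (α : Y → E0) (ψ : E1 → Y)
    (hr : Continuous r) (hs : Continuous s) (hα : Continuous α) (hψ : Continuous ψ)
    (hfact : α ∘ ψ = r) :
    ∃ H : {t : E1 × Y × E1 // s t.1 = α t.2.1 ∧ t.2.1 = ψ t.2.2} ≃ₜ
          {d : E1 × E1 // s d.1 = r d.2},
      (∀ t, (H t).val = (t.val.1, t.val.2.2)) ∧
      (∀ d, (H.symm d).val = (d.val.1, ψ d.val.2, d.val.2)) ∧
      (∀ t, (H t).val.1 = t.val.1) ∧
      (∀ t, (H t).val.2 = t.val.2.2) := by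
  refine ⟨{ toFun := fun t => ⟨(t.val.1, t.val.2.2), by
              have h := t.prop; rw [h.1, h.2, ← hfact]; rfl⟩
            invFun := fun d => ⟨(d.val.1, ψ d.val.2, d.val.2), by
              refine ⟨?_, rfl⟩
              exact d.prop.trans (congrFun hfact.symm _)⟩
            left_inv := fun t => by
              ext <;> simp [t.prop.2.symm]
            right_inv := fun d => rfl
            continuous_toFun := by
              apply Continuous.subtype_mk
              exact ((continuous_subtype_val.fst).prodMk
                (continuous_subtype_val.snd.snd))
            continuous_invFun := by
              apply Continuous.subtype_mk
              exact (continuous_subtype_val.fst.prodMk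
                ((hψ.comp continuous_subtype_val.snd).prodMk
                  continuous_subtype_val.snd)) },
         fun t => rfl, fun d => rfl, fun t => rfl, fun t => rfl⟩
end

section
/- Let n and b be nonzero integers, let g = gcd(n, b), q_n = n/g, q_b = b/g, and let λ ∈ 𝕋 be an element of order |b| in the circle group (a primitive |b|-th root of unity). Then the map Φ : Fin g × 𝕋 → 𝕋 × 𝕋 defined by Φ(k, z) = (z^{q_b}, λ^k · z^{q_n}) is injective, its range is exactly S = {(z₁, z₂) ∈ 𝕋 × 𝕋 : z₁ⁿ = z₂ᵇ}, and Φ induces a homeomorphism from Fin g × 𝕋 onto S, where S carries the subspace topology of 𝕋 × 𝕋. In particular, S is homeomorphic to a disjoint union of gcd(n, b) circles. -/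
lemma circle_exp_zpow (x : ℝ) (m : ℤ) : Circle.exp ((m : ℝ) * x) = Circle.exp x ^ m := by
  have := map_zsmul Circle.expHom m x
  simpa [zsmul_eq_mul] using this

/-- For nonzero integers `n, b` with `g = gcd(n, b)`, `q_n = n / g`, `q_b = b / g`, and `λ` a
primitive `|b|`-th root of unity in the circle group, the map
`Φ(k, z) = (z ^ q_b, λ ^ k * z ^ q_n)` from `Fin g × 𝕋` to `𝕋 × 𝕋` is injective, has range
`S = {(z₁, z₂) | z₁ ^ n = z₂ ^ b}`, and induces a homeomorphism from `Fin g × 𝕋` onto `S`. -/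
theorem statement_7 (n b : ℤ) (hn : n ≠ 0) (hb : b ≠ 0) (lam : Circle)
    (hlam : orderOf lam = b.natAbs) :
    Function.Injective (fun p : Fin (Int.gcd n b) × Circle =>
      ((p.2 ^ (b / (Int.gcd n b : ℤ)), lam ^ (p.1 : ℕ) * p.2 ^ (n / (Int.gcd n b : ℤ))) :
        Circle × Circle)) ∧
    Set.range (fun p : Fin (Int.gcd n b) × Circle =>
      ((p.2 ^ (b / (Int.gcd n b : ℤ)), lam ^ (p.1 : ℕ) * p.2 ^ (n / (Int.gcd n b : ℤ))) :
        Circle × Circle)) = {z : Circle × Circle | z.1 ^ n = z.2 ^ b} ∧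
    ∃ H : Fin (Int.gcd n b) × Circle ≃ₜ {z : Circle × Circle // z.1 ^ n = z.2 ^ b},
      ∀ p : Fin (Int.gcd n b) × Circle,
        ((H p : {z : Circle × Circle // z.1 ^ n = z.2 ^ b}) : Circle × Circle) =
          (p.2 ^ (b / (Int.gcd n b : ℤ)), lam ^ (p.1 : ℕ) * p.2 ^ (n / (Int.gcd n b : ℤ))) := by
  have hg0 : 0 < Int.gcd n b := Int.gcd_pos_iff.mpr (Or.inl hn)
  set g : ℕ := Int.gcd n b with hgdef
  set G : ℤ := (g : ℤ) with hGdef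
  have hG0 : 0 < G := by positivity
  have hGn : G ∣ n := Int.gcd_dvd_left n b
  have hGb : G ∣ b := Int.gcd_dvd_right n b
  set qn : ℤ := n / G with hqndef
  set qb : ℤ := b / G with hqbdef
  have hn' : G * qn = n := Int.mul_ediv_cancel' hGn
  have hb' : G * qb = b := Int.mul_ediv_cancel' hGb
  have hqb0 : qb ≠ 0 := by intro h; rw [h, mul_zero] at hb'; exact hb hb'.symm
  have hcop : Int.gcd qn qb = 1 := Int.gcd_div_gcd_div_gcd hg0
  have hlamb : lam ^ b = 1 := by
    rw [← orderOf_dvd_iff_zpow_eq_one, hlam]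
    exact Int.natAbs_dvd.mpr dvd_rfl
  have hqnb : qn * b = qb * n := by rw [← hn', ← hb']; ring
  set Φ : Fin g × Circle → Circle × Circle :=
    fun p => (p.2 ^ qb, lam ^ (p.1 : ℕ) * p.2 ^ qn) with hΦdef
  have hinj : Function.Injective Φ := by
    rintro ⟨k, z⟩ ⟨k', z'⟩ hp
    simp only [hΦdef, Prod.mk.injEq] at hp
    obtain ⟨h1, h2⟩ := hp
    have hw1 : (z / z') ^ qb = 1 := by rw [div_zpow, h1, div_self']
    have h2' : lam ^ (((k:ℕ)) : ℤ) * z ^ qn = lam ^ (((k':ℕ)) : ℤ) * z' ^ qn := by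
      rw [zpow_natCast, zpow_natCast]; exact h2
    have key : lam ^ (((k:ℕ):ℤ) - ((k':ℕ):ℤ)) * (z / z') ^ qn = 1 := by
      rw [zpow_sub, ← div_eq_mul_inv, div_zpow, div_mul_div_comm, h2', div_self']
    have key2 : lam ^ ((((k:ℕ):ℤ) - ((k':ℕ):ℤ)) * qb) = 1 := by
      have h3 : (lam ^ (((k:ℕ):ℤ) - ((k':ℕ):ℤ)) * (z / z') ^ qn) ^ qb = 1 := by
        rw [key, one_zpow]
      rwa [mul_zpow, ← zpow_mul, ← zpow_mul, mul_comm qn qb, zpow_mul (z/z'), hw1, one_zpow,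
        mul_one] at h3
    have hdvd : (b.natAbs : ℤ) ∣ (((k:ℕ):ℤ) - ((k':ℕ):ℤ)) * qb := by
      rw [← hlam]; exact orderOf_dvd_iff_zpow_eq_one.mpr key2
    have hbabs : b.natAbs = g * qb.natAbs := by
      rw [← hb', Int.natAbs_mul, hGdef, Int.natAbs_natCast]
    have hdvd2 : g * qb.natAbs ∣ ((((k:ℕ):ℤ) - ((k':ℕ):ℤ)) * qb).natAbs := by
      rw [← hbabs]
      exact Int.natCast_dvd_natCast.mp (Int.dvd_natAbs.mpr hdvd)
    rw [Int.natAbs_mul, Nat.mul_dvd_mul_iff_right (Int.natAbs_pos.mpr hqb0)] at hdvd2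
    have hklt : (((k:ℕ):ℤ) - ((k':ℕ):ℤ)).natAbs < g := by
      have := k.isLt; have := k'.isLt; omega
    have hkk0 : (((k:ℕ):ℤ) - ((k':ℕ):ℤ)).natAbs = 0 := Nat.eq_zero_of_dvd_of_lt hdvd2 hklt
    have hkk : k = k' := by
      apply Fin.ext; omega
    subst hkk
    have hw2 : (z / z') ^ qn = 1 := by
      rw [sub_self, zpow_zero, one_mul] at key; exact key
    have hword : orderOf (z / z') ∣ 1 := by
      rw [← hcop]
      exact Nat.dvd_gcd (orderOf_dvd_iff_zpow_eq_one.mpr hw2 |> fun h =>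
          Int.natCast_dvd_natCast.mp (Int.dvd_natAbs.mpr h))
        (Int.natCast_dvd_natCast.mp (Int.dvd_natAbs.mpr (orderOf_dvd_iff_zpow_eq_one.mpr hw1)))
    have : z / z' = 1 := by
      rw [← orderOf_eq_one_iff]; exact Nat.dvd_one.mp hword
    have : z = z' := by
      rwa [div_eq_one] at this
    exact Prod.ext (Fin.ext rfl) this
  have hsurj : ∀ z1 z2 : Circle, z1 ^ n = z2 ^ b → ∃ p : Fin g × Circle, Φ p = (z1, z2) := by
    intro z1 z2 hz
    -- a qb-th root of z1
    set z0 : Circle := Circle.exp ((z1:ℂ).arg / (qb : ℝ)) with hz0def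
    have hz0 : z0 ^ qb = z1 := by
      rw [hz0def, ← circle_exp_zpow]
      rw [mul_div_cancel₀ _ (by exact_mod_cast hqb0)]
      exact Circle.exp_arg z1
    set w : Circle := z2 / z0 ^ qn with hwdef
    have hwb : w ^ b = 1 := by
      rw [hwdef, div_zpow, ← zpow_mul, hqnb, zpow_mul, hz0, ← hz, div_self']
    have hwN : w ^ b.natAbs = 1 := by
      rw [← orderOf_dvd_iff_pow_eq_one]
      exact Int.natCast_dvd_natCast.mp
        (Int.dvd_natAbs.mpr (orderOf_dvd_iff_zpow_eq_one.mpr hwb))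
    haveI : NeZero b.natAbs := ⟨Int.natAbs_ne_zero.mpr hb⟩
    have hoC : orderOf ((lam : ℂ)) = b.natAbs := by
      rw [← hlam]; exact orderOf_injective Circle.coeHom Circle.coe_injective lam
    have hprim : IsPrimitiveRoot ((lam : ℂ)) b.natAbs := hoC ▸ IsPrimitiveRoot.orderOf (lam : ℂ)
    have hwC : (w : ℂ) ^ b.natAbs = 1 := by
      rw [show ((w:ℂ)) = Circle.coeHom w from rfl, ← map_pow, hwN, map_one]
    obtain ⟨j, hj, hjw⟩ := hprim.eq_pow_of_pow_eq_one hwC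
    have hjw' : lam ^ j = w := Circle.coe_injective
      (by rw [show ((lam ^ j : Circle):ℂ) = Circle.coeHom (lam ^ j) from rfl, map_pow]; exact hjw)
    -- adjust j to land in [0, g)
    set s : ℤ := ((j / g : ℕ) : ℤ) with hsdef
    have hjs : (j : ℤ) = ((j % g : ℕ) : ℤ) + G * s := by
      rw [hsdef, hGdef, ← Nat.cast_mul, ← Nat.cast_add]
      exact_mod_cast (Nat.mod_add_div j g).symm
    -- Bezout
    set A : ℤ := Int.gcdA qn qb with hAdef
    set B : ℤ := Int.gcdB qn qb with hBdef
    have hbez : 1 = qn * A + qb * B := by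
      rw [← Int.gcd_eq_gcd_ab qn qb, hcop]; norm_num
    set t : ℤ := s * A with htdef
    set u : ℤ := s * B with hudef
    have htu : qn * t = s - u * qb := by rw [htdef, hudef]; linear_combination (-s) * hbez
    set z : Circle := z0 * lam ^ (G * t) with hzdef
    refine ⟨⟨⟨j % g, Nat.mod_lt j hg0⟩, z⟩, ?_⟩
    simp only [hΦdef, Prod.mk.injEq]
    constructor
    · rw [hzdef, mul_zpow, ← zpow_mul, hz0]
      have h4 : G * t * qb = b * t := by rw [← hb']; ring
      rw [h4, zpow_mul, hlamb, one_zpow, mul_one]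
    · rw [hzdef, mul_zpow, ← zpow_mul]
      have hexp : lam ^ (((j % g : ℕ) : ℤ)) * lam ^ (G * t * qn) = lam ^ (j : ℤ) * (lam ^ b) ^ (-u) := by
        rw [← zpow_mul, ← zpow_add, ← zpow_add]
        congr 1
        linear_combination -hjs + G * htu - u * hb'
      calc lam ^ ((j % g : ℕ)) * (z0 ^ qn * lam ^ (G * t * qn))
          = (lam ^ (((j % g : ℕ)) : ℤ) * lam ^ (G * t * qn)) * z0 ^ qn := by
            rw [zpow_natCast, mul_comm (z0 ^ qn), ← mul_assoc]
        _ = (lam ^ (j : ℤ) * (lam ^ b) ^ (-u)) * z0 ^ qn := by rw [hexp]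
        _ = lam ^ j * z0 ^ qn := by rw [hlamb, one_zpow, mul_one, zpow_natCast]
        _ = w * z0 ^ qn := by rw [hjw']
        _ = z2 := by rw [hwdef, div_mul_cancel]
  have hmem : ∀ p : Fin g × Circle, (Φ p).1 ^ n = (Φ p).2 ^ b := by
    rintro ⟨k, z⟩
    show (z ^ qb) ^ n = (lam ^ (k : ℕ) * z ^ qn) ^ b
    rw [mul_zpow, ← zpow_natCast lam, ← zpow_mul lam, mul_comm (((k:ℕ)) : ℤ) b,
      zpow_mul lam, hlamb, one_zpow, one_mul, ← zpow_mul, ← zpow_mul, hqnb]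
  have hrange : Set.range Φ = {z : Circle × Circle | z.1 ^ n = z.2 ^ b} := by
    ext x
    constructor
    · rintro ⟨p, rfl⟩; exact hmem p
    · intro hx
      obtain ⟨p, hp⟩ := hsurj x.1 x.2 hx
      exact ⟨p, hp⟩
  refine ⟨hinj, hrange, ?_⟩
  set Φ' : Fin g × Circle → {z : Circle × Circle // z.1 ^ n = z.2 ^ b} :=
    fun p => ⟨Φ p, hmem p⟩ with hΦ'def
  have hbij : Function.Bijective Φ' := by
    constructor
    · intro p q h
      exact hinj (congrArg Subtype.val h)
    · rintro ⟨x, hx⟩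
      obtain ⟨p, hp⟩ := hsurj x.1 x.2 hx
      exact ⟨p, Subtype.ext hp⟩
  have hcont : Continuous Φ' := by
    apply Continuous.subtype_mk
    refine Continuous.prodMk ?_ ?_
    · exact (continuous_zpow qb).comp continuous_snd
    · exact ((continuous_of_discreteTopology
          (f := fun k : Fin g => lam ^ (k : ℕ))).comp continuous_fst).mul
        ((continuous_zpow qn).comp continuous_snd)
  have hconte : Continuous (Equiv.ofBijective Φ' hbij) := hcont
  exact ⟨hconte.homeoOfEquivCompactToT2, fun p => rfl⟩
end

section
/- Let n and b be nonzero integers, let g = gcd(n, b), q_n = n/g, q_b = b/g, and let λ ∈ 𝕋 be an element of order |b| in the circle group. For c ∈ ℤ define π_{λ^c} : 𝕋 → 𝕋 × 𝕋 by π_{λ^c}(z) = (z^{q_b}, λ^c · z^{q_n}). Then for all c, d ∈ ℤ, the ranges of π_{λ^c} and π_{λ^d} coincide if and only if there exists k ∈ ℤ such that c ≡ k·n + d (mod |b|). -/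
/-- For nonzero integers `n, b` with `g = gcd(n, b)`, `q_n = n / g`, `q_b = b / g`, and `λ` a
primitive `|b|`-th root of unity in the circle group, the maps
`π_{λ^c}(z) = (z ^ q_b, λ ^ c * z ^ q_n)` and `π_{λ^d}` have the same range if and only if
`c ≡ k·n + d (mod |b|)` for some integer `k`. -/
theorem statement_10 (n b : ℤ) (hn : n ≠ 0) (hb : b ≠ 0) (lam : Circle)
    (hlam : orderOf lam = b.natAbs) (c d : ℤ) :
    Set.range (fun z : Circle =>
        ((z ^ (b / (Int.gcd n b : ℤ)), lam ^ c * z ^ (n / (Int.gcd n b : ℤ))) :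
          Circle × Circle)) =
      Set.range (fun z : Circle =>
        ((z ^ (b / (Int.gcd n b : ℤ)), lam ^ d * z ^ (n / (Int.gcd n b : ℤ))) :
          Circle × Circle)) ↔
    ∃ k : ℤ, (c : ZMod b.natAbs) = ((k * n + d : ℤ) : ZMod b.natAbs) := by
  set g : ℤ := (Int.gcd n b : ℤ) with hg_def
  have hgb : g ∣ b := Int.gcd_dvd_right n b
  have hgn : g ∣ n := Int.gcd_dvd_left n b
  set qb : ℤ := b / g with hqb_def
  set qn : ℤ := n / g with hqn_def
  have hbq : g * qb = b := Int.mul_ediv_cancel' hgb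
  have hnq : g * qn = n := Int.mul_ediv_cancel' hgn
  have hqb0 : qb ≠ 0 := by
    rintro h; rw [h, mul_zero] at hbq; exact hb hbq.symm
  have hdb : (b.natAbs : ℤ) ∣ b := Int.natAbs_dvd.mpr dvd_rfl
  have hord : ∀ m : ℤ, lam ^ m = 1 ↔ (b.natAbs : ℤ) ∣ m := by
    intro m
    rw [← hlam]
    exact orderOf_dvd_iff_zpow_eq_one.symm
  have hzmod : ∀ a a' : ℤ, ((a : ZMod b.natAbs) = (a' : ZMod b.natAbs)) ↔
      (b.natAbs : ℤ) ∣ a' - a := by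
    intro a a'
    rw [ZMod.intCast_eq_intCast_iff]
    exact Int.modEq_iff_dvd
  -- key inclusion
  have key : ∀ c' d' k : ℤ, (b.natAbs : ℤ) ∣ (k * n + d' - c') →
      Set.range (fun z : Circle => ((z ^ qb, lam ^ c' * z ^ qn) : Circle × Circle)) ⊆
      Set.range (fun z : Circle => ((z ^ qb, lam ^ d' * z ^ qn) : Circle × Circle)) := by
    intro c' d' k hk
    rintro _ ⟨z, rfl⟩
    refine ⟨lam ^ (k * g) * z, ?_⟩
    have h1 : lam ^ c' = lam ^ (k * n + d') := by
      have h2 : lam ^ (k * n + d' - c') = 1 := (hord _).mpr hk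
      calc lam ^ c' = lam ^ (k * n + d' - c') * lam ^ c' := by rw [h2, one_mul]
        _ = lam ^ (k * n + d') := by rw [← zpow_add]; ring_nf
    have hfst : (lam ^ (k * g) * z) ^ qb = z ^ qb := by
      rw [mul_zpow, ← zpow_mul]
      have h3 : lam ^ (k * g * qb) = 1 := (hord _).mpr (by
        rw [mul_assoc, hbq]; exact hdb.mul_left k)
      rw [h3, one_mul]
    have hsnd : lam ^ d' * (lam ^ (k * g) * z) ^ qn = lam ^ c' * z ^ qn := by
      rw [mul_zpow, ← zpow_mul, ← mul_assoc, ← zpow_add, h1]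
      congr 2
      rw [mul_assoc, hnq]; ring
    simp only [hfst, hsnd]
  constructor
  · intro hEq
    have h1 : ((1 : Circle) ^ qb, lam ^ c * (1 : Circle) ^ qn) ∈
        Set.range (fun z : Circle => ((z ^ qb, lam ^ d * z ^ qn) : Circle × Circle)) := by
      rw [← hEq]; exact ⟨1, rfl⟩
    obtain ⟨w, hw⟩ := h1
    have hw1 : w ^ qb = 1 := by
      have := congrArg Prod.fst hw; simpa using this
    have hw2 : lam ^ d * w ^ qn = lam ^ c := by
      have := congrArg Prod.snd hw; simpa using this
    -- w is a power of lam
    have hwnat : w ^ (b.natAbs) = (1 : Circle) := by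
      have hwb : w ^ b = 1 := by rw [← hbq, mul_comm, zpow_mul, hw1, one_zpow]
      have hdvd : (orderOf w : ℤ) ∣ b := orderOf_dvd_iff_zpow_eq_one.mpr hwb
      exact orderOf_dvd_iff_pow_eq_one.mp (by simpa using Int.natAbs_dvd_natAbs.mpr hdvd)
    have hbne : b.natAbs ≠ 0 := Int.natAbs_ne_zero.mpr hb
    haveI : NeZero b.natAbs := ⟨hbne⟩
    have hoc : orderOf ((lam : ℂ)) = b.natAbs := by
      have := orderOf_injective Circle.coeHom Circle.coe_injective lam
      change orderOf (lam : ℂ) = orderOf lam at this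
      rw [this, hlam]
    have hprim : IsPrimitiveRoot ((lam : ℂ)) b.natAbs := by
      have := IsPrimitiveRoot.orderOf (lam : ℂ)
      rwa [hoc] at this
    have hwC : ((w : ℂ)) ^ b.natAbs = 1 := by
      have := congrArg Circle.coeHom hwnat
      rw [map_pow, map_one] at this
      exact this
    obtain ⟨i, hi, hiw⟩ := hprim.eq_pow_of_pow_eq_one hwC
    have hwi : lam ^ (i : ℤ) = w := by
      apply Circle.coe_injective
      rw [zpow_natCast, ← hiw]
      have := map_pow Circle.coeHom lam i
      simpa using this
    -- g divides i
    have hiqb : lam ^ ((i : ℤ) * qb) = 1 := by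
      rw [zpow_mul, hwi, hw1]
    have hdvd1 : b ∣ (i : ℤ) * qb := Int.natAbs_dvd.mp ((hord _).mp hiqb)
    have hdvd2 : g * qb ∣ (i : ℤ) * qb := by rw [hbq]; exact hdvd1
    have hgi : g ∣ (i : ℤ) := by
      have := (mul_dvd_mul_iff_right hqb0).mp hdvd2
      exact this
    obtain ⟨t, hit⟩ := hgi
    refine ⟨t, (hzmod _ _).mpr ?_⟩
    have hw2' : lam ^ (d + (i : ℤ) * qn) = lam ^ c := by
      rw [zpow_add, zpow_mul, hwi]; exact hw2
    have h6 : lam ^ (d + (i : ℤ) * qn - c) = 1 := by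
      rw [zpow_sub, hw2']; simp
    have h7 : (b.natAbs : ℤ) ∣ d + (i : ℤ) * qn - c := (hord _).mp h6
    have h8 : t * n + d - c = d + (i : ℤ) * qn - c := by
      rw [← hnq, hit]; ring
    rw [h8]; exact h7
  · rintro ⟨k, hk⟩
    have h1 := (hzmod _ _).mp hk
    apply Set.Subset.antisymm
    · exact key c d k h1
    · refine key d c (-k) ?_
      have h2 : -k * n + c - d = -(k * n + d - c) := by ring
      rw [h2]; exact dvd_neg.mpr h1
end

section
/- Let E⁰, E¹, Y be topological spaces with E⁰ Hausdorff. Let r : E¹ → E⁰ be a continuous surjection such that r⁻¹(K) is compact for every compact K ⊆ E⁰, let s : E¹ → E⁰ be continuous, and let α : Y → E⁰ and ψ : E¹ → Y be surjective local homeomorphisms, each with compact preimages of compact sets, such that α ∘ ψ = s. Equip G = {(y, e) ∈ Y × E¹ : α(y) = r(e)} with the subspace topology of the product, and define r_O : G → Y by r_O(y, e) = y and s_O : G → Y by s_O(y, e) = ψ(e). Then r_O is continuous and surjective with r_O⁻¹(K) compact for every compact K ⊆ Y, and s_O is a local homeomorphism. -/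
/-- For a regular topological graph `E = (E⁰, E¹, r, s)` (with `E⁰` Hausdorff, `r` a continuous
proper surjection and `s` continuous) and an out-split `(α, Y, ψ)` (proper surjective local
homeomorphisms with `α ∘ ψ = s`), the out-split graph with edge space
`G = {(y, e) | α y = r e}`, range map `r_O(y, e) = y` and source map `s_O(y, e) = ψ e` is again
a regular topological graph: `r_O` is continuous, surjective and has compact preimages of
compact sets, and `s_O` is a local homeomorphism. -/
theorem statement_12 {E0 E1 Y : Type*} [TopologicalSpace E0] [TopologicalSpace E1]
    [TopologicalSpace Y] [T2Space E0] (r s : E1 → E0) (α : Y → E0) (ψ : E1 → Y)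
    (hr : Continuous r) (hrsurj : Function.Surjective r)
    (hrproper : ∀ K : Set E0, IsCompact K → IsCompact (r ⁻¹' K))
    (hs : Continuous s)
    (hα : IsLocalHomeomorph α) (hαsurj : Function.Surjective α)
    (hαproper : ∀ K : Set E0, IsCompact K → IsCompact (α ⁻¹' K))
    (hψ : IsLocalHomeomorph ψ) (hψsurj : Function.Surjective ψ)
    (hψproper : ∀ K : Set Y, IsCompact K → IsCompact (ψ ⁻¹' K))
    (hfact : α ∘ ψ = s) :
    Continuous (fun p : {p : Y × E1 // α p.1 = r p.2} => p.val.1) ∧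
    Function.Surjective (fun p : {p : Y × E1 // α p.1 = r p.2} => p.val.1) ∧
    (∀ K : Set Y, IsCompact K →
      IsCompact ((fun p : {p : Y × E1 // α p.1 = r p.2} => p.val.1) ⁻¹' K)) ∧
    IsLocalHomeomorph (fun p : {p : Y × E1 // α p.1 = r p.2} => ψ p.val.2) := by
  classical
  have hcont : Continuous (fun p : {p : Y × E1 // α p.1 = r p.2} => p.val.1) :=
    continuous_fst.comp continuous_subtype_val
  refine ⟨hcont, ?_, ?_, ?_⟩
  · -- surjectivity
    intro y
    obtain ⟨e, he⟩ := hrsurj (α y)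
    exact ⟨⟨(y, e), he.symm⟩, rfl⟩
  · -- properness
    intro K hK
    have hclosed : IsClosed {p : Y × E1 | α p.1 = r p.2} :=
      isClosed_eq ((hα.continuous).comp continuous_fst) (hr.comp continuous_snd)
    have hS : IsCompact ((K ×ˢ (r ⁻¹' (α '' K))) ∩ {p : Y × E1 | α p.1 = r p.2}) :=
      (hK.prod (hrproper _ (hK.image hα.continuous))).inter_right hclosed
    rw [Topology.IsEmbedding.subtypeVal.isCompact_iff]
    convert hS using 1
    ext q
    obtain ⟨y, e⟩ := q
    constructor
    · rintro ⟨⟨⟨y', e'⟩, h'⟩, hy', heq⟩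
      rw [← heq]
      exact ⟨⟨hy', ⟨y', hy', h'⟩⟩, h'⟩
    · rintro ⟨⟨hy, -⟩, h2⟩
      exact ⟨⟨(y, e), h2⟩, hy, rfl⟩
  · -- s_O is a local homeomorphism
    have hπ2 : IsLocalHomeomorph (fun p : {p : Y × E1 // α p.1 = r p.2} => p.val.2) := by
      apply IsLocalHomeomorph.mk
      intro q
      obtain ⟨⟨y, e⟩, h⟩ := q
      obtain ⟨φ, hyφ, hφα⟩ := hα y
      refine ⟨{
        toFun := fun p => p.val.2
        invFun := fun e' => if hmem : r e' ∈ φ.target then ⟨(φ.symm (r e'), e'), by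
            rw [hφα]; exact φ.right_inv hmem⟩ else ⟨(y, e), h⟩
        source := {p | p.val.1 ∈ φ.source}
        target := r ⁻¹' φ.target
        map_source' := fun p hp => by
          show r p.val.2 ∈ φ.target
          exact Set.mem_of_eq_of_mem (p.2.symm.trans (congrFun hφα _))
            (φ.map_source hp)
        map_target' := fun e' he' => by
          simp only [Set.mem_preimage] at he'
          simp only [Set.mem_setOf_eq, dif_pos he']
          exact φ.map_target he'
        left_inv' := fun p hp => by
          have h3 : r p.val.2 ∈ φ.target :=
            Set.mem_of_eq_of_mem (p.2.symm.trans (congrFun hφα _)) (φ.map_source hp)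
          simp only [dif_pos h3]
          apply Subtype.ext
          apply Prod.ext
          · show φ.symm (r p.val.2) = p.val.1
            have h4 : r p.val.2 = φ p.val.1 := p.2.symm.trans (congrFun hφα _)
            rw [h4]
            exact φ.left_inv hp
          · rfl
        right_inv' := fun e' he' => by
          simp only [Set.mem_preimage] at he'
          simp only [dif_pos he']
        open_source := (φ.open_source.preimage (continuous_fst.comp continuous_subtype_val))
        open_target := φ.open_target.preimage hr
        continuousOn_toFun :=
          (continuous_snd.comp continuous_subtype_val).continuousOn
        continuousOn_invFun := by
          rw [Topology.IsEmbedding.subtypeVal.continuousOn_iff]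
          apply ContinuousOn.congr (f := fun e' : E1 => (φ.symm (r e'), e'))
          · exact (φ.continuousOn_symm.comp hr.continuousOn fun x hx => hx).prodMk
              continuousOn_id
          · intro e' he'
            simp only [Set.mem_preimage] at he'
            simp [Function.comp, dif_pos he']
      }, hyφ, fun p _ => rfl⟩
    exact hψ.comp hπ2
end
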